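/- arXiv:math/9804047 — 3 statements merged into one kernel-verified Lean document; each statement's English description precedes it below -/
import Mathlib

section
/- With G₁ = diag(-1, A^{-4}) and G₂ = [[1/(A⁴(1+A⁴)), -(A⁴+A^{-4}+1)/(A²(A⁴+A^{-4}+2))], [-A^{-2}, -1/(1+A^{-4})]] as 2×2 complex matrices (A ∈ C* with all indicated denominators nonzero), each G_i satisfies the Hecke quadratic relation G_i² = (q-1)G_i + q with q = A^{-4}. -/
/-!
By Cayley–Hamilton a `2 × 2` matrix `M` satisfies `M² = (tr M) M - (det M)`, so the Hecke relation
`M² = (q - 1) M + q` holds as soon as `tr M = q - 1` and `det M = -q`, i.e. as soon as the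
characteristic polynomial of `M` is `(X + 1)(X - q)`. For `G₁` this is read off the diagonal; for `G₂`
it is a rational-function identity in `A` once `A⁴ + A⁻⁴ + 2 = (1 + A⁴)² / A⁴` is used.
-/

/-- The matrix `G₁` of the representation `(-A⁻¹)ρ` of `B₃` on `V(3,1)`. -/
noncomputable def G₁ (A : ℂ) : Matrix (Fin 2) (Fin 2) ℂ :=
  !![-1, 0; 0, A ^ (-4 : ℤ)]

/-- The matrix `G₂` of the representation `(-A⁻¹)ρ` of `B₃` on `V(3,1)`. -/
noncomputable def G₂ (A : ℂ) : Matrix (Fin 2) (Fin 2) ℂ :=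
  !![1 / (A ^ 4 * (1 + A ^ 4)), -(A ^ 4 + A ^ (-4 : ℤ) + 1) / (A ^ 2 * (A ^ 4 + A ^ (-4 : ℤ) + 2));
     -A ^ (-2 : ℤ), -1 / (1 + A ^ (-4 : ℤ))]

namespace Matrix

variable {R : Type*} [CommRing R]

theorem mul_self_fin_two (M : Matrix (Fin 2) (Fin 2) R) :
    M * M = M.trace • M - M.det • 1 := by
  ext i j
  fin_cases i <;> fin_cases j <;>
    simp [mul_apply, trace_fin_two, det_fin_two] <;> ring

theorem mul_self_eq_hecke_of_trace_of_det {M : Matrix (Fin 2) (Fin 2) R} {q : R}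
    (htr : M.trace = q - 1) (hdet : M.det = -q) :
    M * M = (q - 1) • M + q • 1 := by
  rw [mul_self_fin_two, htr, hdet, neg_smul, sub_neg_eq_add]

end Matrix

open Matrix

section InvIdentities

variable {K : Type*} [Field K] {t : K}

theorem one_add_inv_eq_div (ht : t ≠ 0) : 1 + t⁻¹ = (1 + t) / t := by
  field_simp
  ring

theorem add_inv_add_two_eq_div (ht : t ≠ 0) : t + t⁻¹ + 2 = (1 + t) ^ 2 / t := by
  field_simp
  ring

end InvIdentities

theorem trace_G₁ (A : ℂ) : (G₁ A).trace = A ^ (-4 : ℤ) - 1 := by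
  simp [G₁, trace_fin_two]
  ring

theorem det_G₁ (A : ℂ) : (G₁ A).det = -A ^ (-4 : ℤ) := by
  simp [G₁, det_fin_two]

theorem trace_G₂ {A : ℂ} (hA : A ≠ 0) (h : 1 + A ^ 4 ≠ 0) :
    (G₂ A).trace = A ^ (-4 : ℤ) - 1 := by
  simp only [G₂, trace_fin_two_of, _root_.zpow_neg, zpow_ofNat,
    one_add_inv_eq_div (pow_ne_zero 4 hA)]
  field_simp
  ring

theorem det_G₂ {A : ℂ} (hA : A ≠ 0) (h : 1 + A ^ 4 ≠ 0) :
    (G₂ A).det = -A ^ (-4 : ℤ) := by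
  simp only [G₂, det_fin_two_of, _root_.zpow_neg, zpow_ofNat,
    one_add_inv_eq_div (pow_ne_zero 4 hA), add_inv_add_two_eq_div (pow_ne_zero 4 hA)]
  field_simp
  ring

theorem hecke_quadratic_V31_general (A : ℂ) (hA0 : A ≠ 0)
    (h1 : A ^ 4 * (1 + A ^ 4) ≠ 0) :
    G₁ A * G₁ A = (A ^ (-4 : ℤ) - 1) • G₁ A + A ^ (-4 : ℤ) • (1 : Matrix (Fin 2) (Fin 2) ℂ) ∧
    G₂ A * G₂ A = (A ^ (-4 : ℤ) - 1) • G₂ A + A ^ (-4 : ℤ) • (1 : Matrix (Fin 2) (Fin 2) ℂ) := by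
  have h14 : 1 + A ^ 4 ≠ 0 := right_ne_zero_of_mul h1
  exact ⟨mul_self_eq_hecke_of_trace_of_det (trace_G₁ A) (det_G₁ A),
    mul_self_eq_hecke_of_trace_of_det (trace_G₂ hA0 h14) (det_G₂ hA0 h14)⟩

/-- each Gᵢ satisfies the Hecke quadratic relation with q = A^{-4}. -/
theorem hecke_quadratic_V31 (A : ℂ) (hA0 : A ≠ 0)
    (h1 : A ^ 4 * (1 + A ^ 4) ≠ 0)
    (h2 : A ^ 2 * (A ^ 4 + A ^ (-4 : ℤ) + 2) ≠ 0)
    (h3 : 1 + A ^ (-4 : ℤ) ≠ 0) :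
    G₁ A * G₁ A = (A ^ (-4 : ℤ) - 1) • G₁ A + A ^ (-4 : ℤ) • (1 : Matrix (Fin 2) (Fin 2) ℂ) ∧
    G₂ A * G₂ A = (A ^ (-4 : ℤ) - 1) • G₂ A + A ^ (-4 : ℤ) • (1 : Matrix (Fin 2) (Fin 2) ℂ) :=
  hecke_quadratic_V31_general A hA0 h1
end

section
/- With G₁ = diag(-1, A^{-4}) and G₂ = [[1/(A⁴(1+A⁴)), -(A⁴+A^{-4}+1)/(A²(A⁴+A^{-4}+2))], [-A^{-2}, -1/(1+A^{-4})]] (A ∈ C*, denominators nonzero), the Temperley-Lieb relation I + G₁ + G₂ + G₁G₂ + G₂G₁ + G₁G₂G₁ = 0 holds. -/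
/-- the Temperley-Lieb relation 1 + G₁ + G₂ + G₁G₂ + G₂G₁ + G₁G₂G₁ = 0. -/
theorem temperley_lieb_relation_V31 (A : ℂ) (hA0 : A ≠ 0)
    (h1 : A ^ 4 * (1 + A ^ 4) ≠ 0)
    (h2 : A ^ 2 * (A ^ 4 + A ^ (-4 : ℤ) + 2) ≠ 0)
    (h3 : 1 + A ^ (-4 : ℤ) ≠ 0) :
    (1 : Matrix (Fin 2) (Fin 2) ℂ) + G₁ A + G₂ A + G₁ A * G₂ A + G₂ A * G₁ A +
      G₁ A * G₂ A * G₁ A = 0 := by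
  have h4 : A ^ 4 + A ^ (-4 : ℤ) + 2 ≠ 0 := fun h => h2 (by rw [h, mul_zero])
  simp only [show (-4 : ℤ) = -(4:ℕ) by norm_num, show (-2 : ℤ) = -(2:ℕ) by norm_num,
    zpow_neg, zpow_natCast, zpow_ofNat] at h1 h2 h3 h4 ⊢
  have hA4 : (A:ℂ) ^ 4 ≠ 0 := pow_ne_zero _ hA0
  have hA2 : (A:ℂ) ^ 2 ≠ 0 := pow_ne_zero _ hA0
  have h6 : (1:ℂ) + A ^ 4 ≠ 0 := right_ne_zero_of_mul h1
  have h5 : (A:ℂ) ^ 4 + A ^ 8 ≠ 0 := by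
    have : (A:ℂ) ^ 4 + A ^ 8 = A ^ 4 * (1 + A ^ 4) := by ring
    rw [this]; exact h1
  have h7 : (A:ℂ) ^ 4 + 1 ≠ 0 := by rwa [add_comm] at h6
  have h8 : (A:ℂ) ^ 8 + A ^ 12 ≠ 0 := by
    rw [show (A:ℂ) ^ 8 + A ^ 12 = A ^ 8 * (A ^ 4 + 1) by ring]
    exact mul_ne_zero (pow_ne_zero _ hA0) h7
  ext i j
  fin_cases i <;> fin_cases j <;>
    simp [G₁, G₂, Matrix.mul_apply, Fin.sum_univ_succ, Matrix.one_apply,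
      show (-4 : ℤ) = -(4:ℕ) by norm_num, show (-2 : ℤ) = -(2:ℕ) by norm_num,
      zpow_neg, zpow_natCast, zpow_ofNat]
  all_goals field_simp
  all_goals ring
end

section
/- Let r ≥ 5 be an integer, r ∉ {6, 10}. Suppose x, y ∈ SO(3) are two non-commuting elements each of order 2r if r is odd, r/2 if r ≡ 2 (mod 4), and r if r ≡ 0 (mod 4). Then the subgroup of SO(3) generated by x and y is infinite. -/
/-!
Every element of `SO(3)` is a rotation about a unit axis, and a rotation of order `n ≥ 7` has a
power rotating by `2π/n < π/3` about the same axis. In a finite subgroup `K`, take two axes `p`,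
`q` of elements of order `≥ 7` with `q ≠ ±p` and `⟪p, q⟫` as large as possible. Rotating `q`
about `p` by an angle below `π/3` gives the axis `q'` of a conjugate element, and `⟪q, q'⟫` beats
`⟪p, q⟫`: a contradiction. So all elements of order `≥ 7` of `K` share an axis up to sign and
therefore commute, while the hypotheses on `r` make the orders of `x` and `y` at least `7`.
-/

open Module
open scoped RealInnerProductSpace Matrix

theorem Matrix.det_sub_one_eq_zero_of_mem_specialOrthogonalGroup {n : Type*} [Fintype n]
    [DecidableEq n] (hn : Odd (Fintype.card n)) {A : Matrix n n ℝ}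
    (hA : A ∈ Matrix.specialOrthogonalGroup n ℝ) : (A - 1).det = 0 := by
  obtain ⟨hAo, hdet⟩ := Matrix.mem_specialOrthogonalGroup_iff.mp hA
  have hAt : A * Aᵀ = 1 := (Matrix.mem_orthogonalGroup_iff _ _).mp hAo
  have key : A - 1 = -(A * (A - 1)ᵀ) := by
    rw [Matrix.transpose_sub, Matrix.transpose_one, Matrix.mul_sub, hAt, mul_one]; abel
  have h := congrArg Matrix.det key
  rw [Matrix.det_neg, Matrix.det_mul, Matrix.det_transpose, hdet, one_mul, hn.neg_one_pow] at h
  linarith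

theorem Complex.exists_pow_re_mem_Ioo {z : ℂ} (hz : 7 ≤ orderOf z) :
    ∃ j, (z ^ j).re ∈ Set.Ioo (1 / 2) 1 := by
  set n := orderOf z
  have hn : (7 : ℝ) ≤ n := by exact_mod_cast hz
  have : NeZero n := ⟨by omega⟩
  obtain ⟨j, -, hj⟩ := (IsPrimitiveRoot.orderOf z).eq_pow_of_pow_eq_one
    (Complex.isPrimitiveRoot_exp n (by omega)).pow_eq_one
  have hre : (z ^ j).re = Real.cos (2 * Real.pi / n) := by
    rw [hj, show 2 * Real.pi * I / n = ((2 * Real.pi / n : ℝ) : ℂ) * I by push_cast; ring,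
      Complex.exp_ofReal_mul_I_re]
  have hpos : 0 < 2 * Real.pi / n := by positivity
  have hsmall : 2 * Real.pi / n < Real.pi / 3 := by
    rw [div_lt_div_iff₀ (by positivity) (by norm_num)]
    nlinarith [Real.pi_pos]
  refine ⟨j, ?_, ?_⟩ <;> rw [hre]
  · rw [← Real.cos_pi_div_three]
    exact Real.cos_lt_cos_of_nonneg_of_le_pi hpos.le (by linarith [Real.pi_pos]) hsmall
  · rw [← Real.cos_zero]
    exact Real.cos_lt_cos_of_nonneg_of_le_pi le_rfl (by linarith [Real.pi_pos]) hpos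

variable {V : Type*} [NormedAddCommGroup V] [InnerProductSpace ℝ V]

theorem eq_or_eq_neg_of_abs_inner_eq_one {u v : V} (hu : ‖u‖ = 1) (hv : ‖v‖ = 1)
    (h : |⟪u, v⟫| = 1) : v = u ∨ v = -u := by
  rcases abs_eq (zero_le_one' ℝ) |>.mp h with h | h
  · exact .inl ((inner_eq_one_iff_of_norm_eq_one hu hv).mp h).symm
  · exact .inr (neg_eq_iff_eq_neg.mp ((inner_eq_neg_one_iff_of_norm_eq_one hu hv).mp h).symm)

theorem exists_orthonormalBasis_apply_zero_eq (hV : finrank ℝ V = 3) {u : V} (hu : ‖u‖ = 1) :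
    ∃ b : OrthonormalBasis (Fin 3) ℝ V, b 0 = u := by
  have : FiniteDimensional ℝ V := Module.finite_of_finrank_eq_succ hV
  have horth : Orthonormal ℝ (({0} : Set (Fin 3)).domRestrict fun _ => u) := by
    rw [orthonormal_iff_ite]
    rintro ⟨i, rfl⟩ ⟨j, rfl⟩
    simp [Set.domRestrict, hu]
  obtain ⟨b, hb⟩ := horth.exists_orthonormalBasis_extension_of_card_eq (by simpa using hV)
  exact ⟨b, hb 0 rfl⟩

theorem LinearIsometryEquiv.exists_norm_eq_one_apply_eq_self (hV : Odd (finrank ℝ V))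
    (g : V ≃ₗᵢ[ℝ] V) (hg : LinearMap.det (g : V →ₗ[ℝ] V) = 1) : ∃ u, ‖u‖ = 1 ∧ g u = u := by
  have : FiniteDimensional ℝ V := Module.finite_of_finrank_pos hV.pos
  let b := (stdOrthonormalBasis ℝ V).toBasis
  have hA : LinearMap.toMatrix b b g ∈ Matrix.specialOrthogonalGroup _ ℝ :=
    ⟨g.toMatrix_mem_unitaryGroup _ _, by simpa [LinearMap.det_toMatrix] using hg⟩
  have hdet : LinearMap.det ((g : V →ₗ[ℝ] V) - LinearMap.id) = 0 := by
    have hsub : LinearMap.toMatrix b b ((g : V →ₗ[ℝ] V) - LinearMap.id)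
        = LinearMap.toMatrix b b g - 1 := by simp
    rw [← LinearMap.det_toMatrix b, hsub]
    exact Matrix.det_sub_one_eq_zero_of_mem_specialOrthogonalGroup (by simpa using hV) hA
  obtain ⟨v, hv, hv0⟩ := Submodule.exists_mem_ne_zero_of_ne_bot
    (LinearMap.bot_lt_ker_of_det_eq_zero hdet).ne'
  have hgv : g v = v := by simpa [sub_eq_zero] using hv
  exact ⟨‖v‖⁻¹ • v, norm_smul_inv_norm hv0, by rw [map_smul, hgv]⟩

/-- `g` fixes `b 0` and rotates the plane of `b 1`, `b 2` by the angle `θ` with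
`z = cos θ + i sin θ`, so that composing rotations about `b 0` multiplies the `z`'s. -/
def IsRotation (b : OrthonormalBasis (Fin 3) ℝ V) (g : V ≃ₗᵢ[ℝ] V) (z : ℂ) : Prop :=
  g (b 0) = b 0 ∧ g (b 1) = z.re • b 1 + z.im • b 2 ∧ g (b 2) = (-z.im) • b 1 + z.re • b 2

namespace IsRotation

variable {b : OrthonormalBasis (Fin 3) ℝ V} {g h : V ≃ₗᵢ[ℝ] V} {z w : ℂ}

theorem one (b : OrthonormalBasis (Fin 3) ℝ V) : IsRotation b 1 1 := by
  simp [IsRotation]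

theorem mul (hg : IsRotation b g z) (hh : IsRotation b h w) : IsRotation b (g * h) (z * w) := by
  obtain ⟨hg0, hg1, hg2⟩ := hg
  obtain ⟨hh0, hh1, hh2⟩ := hh
  refine ⟨?_, ?_, ?_⟩ <;>
    simp only [LinearIsometryEquiv.coe_mul, Function.comp_apply, hh0, hh1, hh2, map_add, map_smul,
      hg0, hg1, hg2, Complex.mul_re, Complex.mul_im] <;> module

theorem pow (hg : IsRotation b g z) (m : ℕ) : IsRotation b (g ^ m) (z ^ m) := by
  induction m with
  | zero => simpa using one b
  | succ m ih => simpa only [pow_succ] using ih.mul hg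

theorem left_unique (hg : IsRotation b g z) (hh : IsRotation b h z) : g = h := by
  refine LinearIsometryEquiv.toLinearEquiv_injective (b.toBasis.ext' fun i => ?_)
  fin_cases i
  exacts [hg.1.trans hh.1.symm, hg.2.1.trans hh.2.1.symm, hg.2.2.trans hh.2.2.symm]

theorem right_unique (hg : IsRotation b g z) (hh : IsRotation b g w) : z = w := by
  have h1 := hg.2.1.symm.trans hh.2.1
  have hre := congrArg (fun v => ⟪b 1, v⟫) h1
  have him := congrArg (fun v => ⟪b 2, v⟫) h1
  simp [inner_add_right, inner_smul_right, b.inner_eq_ite] at hre him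
  exact Complex.ext hre him

theorem eq_iff (hg : IsRotation b g z) (hh : IsRotation b h w) : g = h ↔ z = w :=
  ⟨fun hgh => (hgh ▸ hg).right_unique hh, fun hzw => hg.left_unique (hzw ▸ hh)⟩

theorem orderOf_eq (hg : IsRotation b g z) : orderOf g = orderOf z :=
  orderOf_eq_orderOf_iff.mpr fun m => (hg.pow m).eq_iff (one b)

theorem commute (hg : IsRotation b g z) (hh : IsRotation b h w) : Commute g h :=
  ((hg.mul hh).eq_iff (hh.mul hg)).mpr (mul_comm z w)

theorem normSq_eq_one (hg : IsRotation b g z) : Complex.normSq z = 1 := by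
  have h := congrArg (· ^ 2) (g.norm_map (b 1))
  simp only [hg.2.1, b.orthonormal.1 1, ← real_inner_self_eq_norm_sq, inner_add_right,
    inner_add_left, inner_smul_right, inner_smul_left, b.inner_eq_ite] at h
  simp at h
  rw [Complex.normSq_apply]; linarith

theorem re_lt_one (hg : IsRotation b g z) (hg1 : g ≠ 1) : z.re < 1 := by
  have hz1 : z ≠ 1 := fun hz => hg1 ((hg.eq_iff (one b)).mpr hz)
  have hnorm := hg.normSq_eq_one
  rw [Complex.normSq_apply] at hnorm
  refine lt_of_le_of_ne (by nlinarith) fun hre => hz1 (Complex.ext hre ?_)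
  simp only [Complex.one_im]
  nlinarith

theorem inner_apply_self (hg : IsRotation b g z) (v : V) :
    ⟪v, g v⟫ = z.re * ‖v‖ ^ 2 + (1 - z.re) * ⟪b 0, v⟫ ^ 2 := by
  have hv := b.sum_repr' v
  rw [Fin.sum_univ_three] at hv
  rw [← real_inner_self_eq_norm_sq, ← hv]
  simp only [map_add, map_smul, hg.1, hg.2.1, hg.2.2, inner_add_right, inner_add_left,
    inner_smul_right, inner_smul_left, b.inner_eq_ite]
  simp
  ring

end IsRotation

namespace LinearIsometryEquiv

variable {g h : V ≃ₗᵢ[ℝ] V} {u v : V}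

theorem exists_isRotation (b : OrthonormalBasis (Fin 3) ℝ V) (g : V ≃ₗᵢ[ℝ] V)
    (hg : LinearMap.det (g : V →ₗ[ℝ] V) = 1) (h0 : g (b 0) = b 0) : ∃ z, IsRotation b g z := by
  have expand (i) :
      g (b i) = ⟪b 0, g (b i)⟫ • b 0 + ⟪b 1, g (b i)⟫ • b 1 + ⟪b 2, g (b i)⟫ • b 2 := by
    rw [← Fin.sum_univ_three (fun j => ⟪b j, g (b i)⟫ • b j), b.sum_repr']
  have hperp (i) (hi : i ≠ 0) : ⟪b 0, g (b i)⟫ = 0 := by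
    rw [← h0, g.inner_map_map, b.inner_eq_ite, if_neg hi.symm]
  have hinner (i j) : ⟪g (b i), g (b j)⟫ = if i = j then 1 else 0 := by
    rw [g.inner_map_map, b.inner_eq_ite]
  set a := ⟪b 1, g (b 1)⟫
  set c := ⟪b 2, g (b 1)⟫
  set a' := ⟪b 1, g (b 2)⟫
  set d := ⟪b 2, g (b 2)⟫
  have h1 : g (b 1) = a • b 1 + c • b 2 := by simpa [hperp 1 (by decide)] using expand 1
  have h2 : g (b 2) = a' • b 1 + d • b 2 := by simpa [hperp 2 (by decide)] using expand 2
  have hdet : a * d - a' * c = 1 := by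
    rw [← hg, ← LinearMap.det_toMatrix b.toBasis, Matrix.det_fin_three]
    simp [LinearMap.toMatrix_apply, h0, b.repr_apply_apply, a, c, a', d]
  have hn1 : a ^ 2 + c ^ 2 = 1 := by
    have := hinner 1 1
    simp only [h1, inner_add_left, inner_add_right, inner_smul_left, inner_smul_right,
      b.inner_eq_ite] at this
    simp at this; linarith
  have ho : a * a' + c * d = 0 := by
    have := hinner 1 2
    simp only [h1, h2, inner_add_left, inner_add_right, inner_smul_left, inner_smul_right,
      b.inner_eq_ite] at this
    simp at this; linarith
  refine ⟨⟨a, c⟩, h0, h1, ?_⟩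
  rw [h2]
  congr 2
  · linear_combination -a' * hn1 - c * hdet + a * ho
  · linear_combination -d * hn1 + a * hdet + c * ho

theorem exists_isRotation_of_apply_eq_self (hV : finrank ℝ V = 3)
    (hg : LinearMap.det (g : V →ₗ[ℝ] V) = 1) (hu : ‖u‖ = 1) (hgu : g u = u) :
    ∃ b z, b 0 = u ∧ IsRotation b g z := by
  obtain ⟨b, rfl⟩ := exists_orthonormalBasis_apply_zero_eq hV hu
  obtain ⟨z, hz⟩ := g.exists_isRotation b hg hgu
  exact ⟨b, z, rfl, hz⟩

theorem commute_of_apply_eq_self (hV : finrank ℝ V = 3) (hg : LinearMap.det (g : V →ₗ[ℝ] V) = 1)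
    (hh : LinearMap.det (h : V →ₗ[ℝ] V) = 1) (hu : ‖u‖ = 1) (hgu : g u = u) (hhu : h u = u) :
    Commute g h := by
  obtain ⟨b, z, rfl, hgz⟩ := exists_isRotation_of_apply_eq_self hV hg hu hgu
  obtain ⟨w, hhw⟩ := h.exists_isRotation b hh hhu
  exact hgz.commute hhw

theorem eq_or_eq_neg_of_apply_eq_self (hV : finrank ℝ V = 3)
    (hg : LinearMap.det (g : V →ₗ[ℝ] V) = 1) (hg1 : g ≠ 1) (hu : ‖u‖ = 1) (hv : ‖v‖ = 1)
    (hgu : g u = u) (hgv : g v = v) : v = u ∨ v = -u := by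
  obtain ⟨b, z, rfl, hgz⟩ := exists_isRotation_of_apply_eq_self hV hg hu hgu
  have hre := hgz.re_lt_one hg1
  have hinner := hgz.inner_apply_self v
  rw [hgv, real_inner_self_eq_norm_sq, hv] at hinner
  refine eq_or_eq_neg_of_abs_inner_eq_one hu hv ?_
  have : (1 - z.re) * (⟪b 0, v⟫ ^ 2 - 1) = 0 := by linear_combination -hinner
  rcases mul_eq_zero.mp this with h | h
  · linarith
  · exact (pow_eq_one_iff_of_nonneg (abs_nonneg _) two_ne_zero).mp (by rw [sq_abs]; linarith)

end LinearIsometryEquiv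

/-- The bound `7` makes some power of each such `g` a rotation by an angle in `(0, π/3)`. -/
def rotationAxes (K : Subgroup (V ≃ₗᵢ[ℝ] V)) : Set V :=
  {u | ‖u‖ = 1 ∧ ∃ g ∈ K, LinearMap.det (g : V →ₗ[ℝ] V) = 1 ∧ 7 ≤ orderOf g ∧ g u = u}

namespace rotationAxes

variable {K : Subgroup (V ≃ₗᵢ[ℝ] V)}

theorem finite (hV : finrank ℝ V = 3) [Finite K] : (rotationAxes K).Finite := by
  have hsub : rotationAxes K ⊆ ⋃ g ∈ (K : Set (V ≃ₗᵢ[ℝ] V)),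
      {u | ‖u‖ = 1 ∧ LinearMap.det (g : V →ₗ[ℝ] V) = 1 ∧ 7 ≤ orderOf g ∧ g u = u} :=
    fun u ⟨hu, g, hgK, hg⟩ => Set.mem_biUnion hgK ⟨hu, hg⟩
  refine ((Set.toFinite _).biUnion fun g _ => ?_).subset hsub
  rcases Set.eq_empty_or_nonempty
    {u : V | ‖u‖ = 1 ∧ LinearMap.det (g : V →ₗ[ℝ] V) = 1 ∧ 7 ≤ orderOf g ∧ g u = u}
    with he | ⟨u, hu, hdet, hord, hgu⟩
  · simp [he]
  have hg1 : g ≠ 1 := by rintro rfl; simp at hord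
  refine (Set.toFinite {u, -u}).subset fun v ⟨hv, _, _, hgv⟩ => ?_
  exact g.eq_or_eq_neg_of_apply_eq_self hV hdet hg1 hu hv hgu hgv

theorem apply_mem {B : V ≃ₗᵢ[ℝ] V} (hB : B ∈ K) {u : V} (hu : u ∈ rotationAxes K) :
    B u ∈ rotationAxes K := by
  obtain ⟨hu1, g, hgK, hdet, hord, hgu⟩ := hu
  refine ⟨by rw [B.norm_map, hu1], B * g * B⁻¹, K.mul_mem (K.mul_mem hB hgK) (K.inv_mem hB),
    ?_, ?_, ?_⟩
  · have hcoe : ((B * g * B⁻¹ : V ≃ₗᵢ[ℝ] V) : V →ₗ[ℝ] V)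
        = (B : V →ₗ[ℝ] V) * (g : V →ₗ[ℝ] V) * (B⁻¹ : V ≃ₗᵢ[ℝ] V) := rfl
    have hBB : (B : V →ₗ[ℝ] V) * (B⁻¹ : V ≃ₗᵢ[ℝ] V) = 1 := by
      ext x; exact B.apply_symm_apply x
    rw [hcoe, map_mul, map_mul, mul_right_comm, ← map_mul, hBB, map_one, one_mul, hdet]
  · rwa [← MulAut.conj_apply, (MulAut.conj B).orderOf_eq]
  · simp [hgu]

theorem exists_inner_lt (hV : finrank ℝ V = 3) {p q : V} (hp : p ∈ rotationAxes K)
    (hq : q ∈ rotationAxes K) (hpq : |⟪p, q⟫| < 1) :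
    ∃ q' ∈ rotationAxes K, |⟪q, q'⟫| < 1 ∧ ⟪p, q⟫ < ⟪q, q'⟫ := by
  obtain ⟨hp1, g, hgK, hdet, hord, hgp⟩ := hp
  obtain ⟨b, z, rfl, hgz⟩ := g.exists_isRotation_of_apply_eq_self hV hdet hp1 hgp
  obtain ⟨j, ha, ha1⟩ := Complex.exists_pow_re_mem_Ioo (hgz.orderOf_eq ▸ hord)
  refine ⟨(g ^ j) q, apply_mem (K.pow_mem hgK j) hq, ?_⟩
  rw [(hgz.pow j).inner_apply_self q, hq.1]
  set a := (z ^ j).re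
  set t := ⟪b 0, q⟫
  obtain ⟨ht, ht1⟩ := abs_lt.mp hpq
  -- `⟪q, q'⟫ = 1 - (1 - a) (1 - t ^ 2)` and `⟪q, q'⟫ - t = (1 - t) (a - (1 - a) t)`
  have hfar : 0 < (1 - a) * (1 - t ^ 2) := mul_pos (by linarith) (by nlinarith)
  have hcloser : 0 < (1 - t) * (a - (1 - a) * t) := mul_pos (by linarith) (by nlinarith)
  have hnonneg : 0 ≤ (1 - a) * t ^ 2 := mul_nonneg (by linarith) (sq_nonneg t)
  exact ⟨abs_lt.mpr ⟨by linarith, by linarith⟩, by linarith⟩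

theorem abs_inner_eq_one (hV : finrank ℝ V = 3) [Finite K] {p q : V}
    (hp : p ∈ rotationAxes K) (hq : q ∈ rotationAxes K) : |⟪p, q⟫| = 1 := by
  by_contra hne
  have hlt : |⟪p, q⟫| < 1 :=
    lt_of_le_of_ne (by simpa [hp.1, hq.1] using abs_real_inner_le_norm p q) hne
  let D := {x : V × V | x.1 ∈ rotationAxes K ∧ x.2 ∈ rotationAxes K ∧ |⟪x.1, x.2⟫| < 1}
  have hD : D.Finite := ((finite hV).prod (finite hV)).subset fun x hx => ⟨hx.1, hx.2.1⟩
  obtain ⟨⟨p₀, q₀⟩, ⟨hp₀, hq₀, h₀⟩, hmax⟩ :=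
    hD.exists_maximalFor (fun x => ⟪x.1, x.2⟫) D ⟨(p, q), hp, hq, hlt⟩
  obtain ⟨q', hq', h', hlt'⟩ := exists_inner_lt hV hp₀ hq₀ h₀
  exact hlt'.not_ge (hmax (j := (q₀, q')) ⟨hq₀, hq', h'⟩ hlt'.le)

end rotationAxes

theorem LinearIsometryEquiv.commute_of_seven_le_orderOf (hV : finrank ℝ V = 3)
    (K : Subgroup (V ≃ₗᵢ[ℝ] V)) [Finite K] {g h : V ≃ₗᵢ[ℝ] V} (hgK : g ∈ K) (hhK : h ∈ K)
    (hg : LinearMap.det (g : V →ₗ[ℝ] V) = 1) (hh : LinearMap.det (h : V →ₗ[ℝ] V) = 1)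
    (hgo : 7 ≤ orderOf g) (hho : 7 ≤ orderOf h) : Commute g h := by
  have hodd : Odd (finrank ℝ V) := hV ▸ by decide
  obtain ⟨u, hu, hgu⟩ := g.exists_norm_eq_one_apply_eq_self hodd hg
  obtain ⟨v, hv, hhv⟩ := h.exists_norm_eq_one_apply_eq_self hodd hh
  have hhu : h u = u := by
    have := rotationAxes.abs_inner_eq_one hV ⟨hv, h, hhK, hh, hho, hhv⟩ ⟨hu, g, hgK, hg, hgo, hgu⟩
    rcases eq_or_eq_neg_of_abs_inner_eq_one hv hu this with rfl | rfl
    · exact hhv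
    · rw [map_neg, hhv]
  exact g.commute_of_apply_eq_self hV hg hh hu hgu hhu

namespace Matrix.orthogonalGroup

variable {n : Type*} [Fintype n] [DecidableEq n]

variable (n) in
noncomputable def toLinearIsometryEquiv :
    orthogonalGroup n ℝ →* (EuclideanSpace ℝ n ≃ₗᵢ[ℝ] EuclideanSpace ℝ n) :=
  Unitary.linearIsometryEquiv.toMonoidHom.comp
    (Unitary.map (StarMonoidHom.ofClass (toEuclideanCLM (n := n) (𝕜 := ℝ)))).toMonoidHom

theorem toLinearIsometryEquiv_injective : Function.Injective (toLinearIsometryEquiv n) :=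
  Unitary.linearIsometryEquiv.injective.comp
    (Unitary.map_injective (toEuclideanCLM (n := n) (𝕜 := ℝ)).injective)

theorem det_toLinearIsometryEquiv (A : orthogonalGroup n ℝ) :
    LinearMap.det (toLinearIsometryEquiv n A : EuclideanSpace ℝ n →ₗ[ℝ] EuclideanSpace ℝ n)
      = (A : Matrix n n ℝ).det := by
  rw [← LinearMap.det_toLin (PiLp.basisFun 2 ℝ n), ← toLpLin_eq_toLin]
  rfl

theorem commute_of_seven_le_orderOf (H : Subgroup (orthogonalGroup (Fin 3) ℝ)) [Finite H]
    {x y : orthogonalGroup (Fin 3) ℝ} (hxH : x ∈ H) (hyH : y ∈ H)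
    (hdetx : (x : Matrix (Fin 3) (Fin 3) ℝ).det = 1)
    (hdety : (y : Matrix (Fin 3) (Fin 3) ℝ).det = 1)
    (hxo : 7 ≤ orderOf x) (hyo : 7 ≤ orderOf y) : Commute x y := by
  let ρ := toLinearIsometryEquiv (Fin 3)
  have hρo (g) : orderOf (ρ g) = orderOf g := orderOf_injective ρ toLinearIsometryEquiv_injective g
  have : Finite (H.map ρ) :=
    .of_equiv _ (H.equivMapOfInjective ρ toLinearIsometryEquiv_injective).toEquiv
  have hρ := LinearIsometryEquiv.commute_of_seven_le_orderOf finrank_euclideanSpace_fin (H.map ρ)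
    (H.mem_map_of_mem ρ hxH) (H.mem_map_of_mem ρ hyH)
    (by rwa [det_toLinearIsometryEquiv]) (by rwa [det_toLinearIsometryEquiv])
    ((hρo x).symm ▸ hxo) ((hρo y).symm ▸ hyo)
  exact toLinearIsometryEquiv_injective (by simpa using hρ.eq)

end Matrix.orthogonalGroup

/-- two non-commuting elements of `SO(3)` (orthogonal 3×3 real matrices of
determinant 1) of order `2r` (r odd), `r/2` (r ≡ 2 mod 4) or `r` (r ≡ 0 mod 4), with
`r ≥ 5`, `r ∉ {6,10}`, generate an infinite subgroup. -/
theorem so3_two_elements_infinite (r : ℕ) (hr : 5 ≤ r) (hr6 : r ≠ 6) (hr10 : r ≠ 10)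
    (x y : Matrix.orthogonalGroup (Fin 3) ℝ)
    (hdetx : (x : Matrix (Fin 3) (Fin 3) ℝ).det = 1)
    (hdety : (y : Matrix (Fin 3) (Fin 3) ℝ).det = 1)
    (hcomm : x * y ≠ y * x)
    (hx : orderOf x = if r % 2 = 1 then 2 * r else if r % 4 = 2 then r / 2 else r)
    (hy : orderOf y = if r % 2 = 1 then 2 * r else if r % 4 = 2 then r / 2 else r) :
    Infinite (Subgroup.closure {x, y}) := by
  have hxo : 7 ≤ orderOf x := by rw [hx]; split_ifs <;> omega
  refine not_finite_iff_infinite.mp fun _ => hcomm ?_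
  exact (Matrix.orthogonalGroup.commute_of_seven_le_orderOf _
    (Subgroup.subset_closure (Set.mem_insert x {y}))
    (Subgroup.subset_closure (Set.mem_insert_of_mem x rfl))
    hdetx hdety hxo (hy ▸ hx ▸ hxo)).eq
end
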